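/- arXiv:2212.02596 — 2 statements merged into one kernel-verified Lean document; each statement's English description precedes it below -/
import Mathlib

section
/- Let X be a real Banach space with topological dual X*, and let T : X ⇉ X* be a set-valued operator identified with its graph. If T is monotone and its range equals T(0_X) (the value of T at the zero vector of X), then T is contained in the subdifferential of the functional g : X → ℝ ∪ {+∞} defined by g(x) := sup{⟨x, x*⟩ : x* ∈ cl conv T(0_X)}, the restriction to X of the support functional of the closed convex hull of T(0_X); that is, for every (x, x*) in the graph of T, g(y) ≥ g(x) + ⟨y − x, x*⟩ for all y ∈ X. -/
/-! By the range condition every `x* ∈ T(x)` lies in `T(0)`, and monotonicity against the pairs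
`(0, u)`, `u ∈ T(0)`, gives `⟨x, u⟩ ≤ ⟨x, x*⟩`. This half-space inequality passes to the closed
convex hull `C` of `T(0)`, so `x*` maximises `⟨x, ·⟩` over `C`; a maximiser of the support
functional of `C` at `x` is a subgradient of it there. -/

open Set

noncomputable section

variable {X : Type*} [NormedAddCommGroup X] [NormedSpace ℝ X]

/-- Monotonicity of a set-valued operator `T : X ⇉ X*`, identified with its graph. -/
def MonotoneGraph (T : Set (X × (X →L[ℝ] ℝ))) : Prop :=
  ∀ p ∈ T, ∀ q ∈ T, 0 ≤ (p.2 - q.2) (p.1 - q.1)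

/-- Maximal monotonicity: monotone and not properly contained in any monotone graph. -/
def MaximalMonotoneGraph (T : Set (X × (X →L[ℝ] ℝ))) : Prop :=
  MonotoneGraph T ∧ ∀ S : Set (X × (X →L[ℝ] ℝ)), MonotoneGraph S → T ⊆ S → S = T

/-- Domain of a set-valued operator given by its graph. -/
def graphDom (T : Set (X × (X →L[ℝ] ℝ))) : Set X := {x | ∃ u, (x, u) ∈ T}

/-- Range of a set-valued operator given by its graph. -/
def graphRange (T : Set (X × (X →L[ℝ] ℝ))) : Set (X →L[ℝ] ℝ) := {u | ∃ x, (x, u) ∈ T}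

/-- The normal cone operator `N_C : X ⇉ X*` of a set `C ⊆ X`, as a graph. -/
def normalConeGraph (C : Set X) : Set (X × (X →L[ℝ] ℝ)) :=
  {p | p.1 ∈ C ∧ ∀ y ∈ C, p.2 (y - p.1) ≤ 0}

/-- The Fenchel subdifferential operator `∂f : X ⇉ X*` of `f : X → ℝ ∪ {+∞}`, as a graph. -/
def subdiffGraph (f : X → EReal) : Set (X × (X →L[ℝ] ℝ)) :=
  {p | ∀ y : X, f p.1 + ((p.2 (y - p.1) : ℝ) : EReal) ≤ f y}

/-- `f` is proper: never `−∞` and not identically `+∞`. -/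
def ProperFn (f : X → EReal) : Prop := (∀ x, f x ≠ ⊥) ∧ ∃ x, f x ≠ ⊤

/-- Convexity of an extended-real-valued functional. -/
def ConvexFn (f : X → EReal) : Prop :=
  ∀ x y : X, ∀ t : ℝ, 0 ≤ t → t ≤ 1 →
    f (t • x + (1 - t) • y) ≤ (t : EReal) * f x + ((1 - t : ℝ) : EReal) * f y

/-- Positive homogeneity: `f (c • x) = c * f x` for `c ≥ 0` and `f x` finite. -/
def PosHomFn (f : X → EReal) : Prop :=
  ∀ x : X, f x ≠ ⊤ → ∀ c : ℝ, 0 ≤ c → f (c • x) = (c : EReal) * f x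

/-- The epigraph of `f : X → ℝ ∪ {+∞}`. -/
def Epi (f : X → EReal) : Set (X × ℝ) := {p | f p.1 ≤ (p.2 : EReal)}

/-- Duality pairing between `X × ℝ` and `X* × ℝ`. -/
def pairXR (p : X × ℝ) (q : (X →L[ℝ] ℝ) × ℝ) : ℝ := q.1 p.1 + p.2 * q.2

/-- Monotonicity of an operator `A : X × ℝ ⇉ X* × ℝ`, identified with its graph. -/
def MonotoneGraphXR (A : Set ((X × ℝ) × ((X →L[ℝ] ℝ) × ℝ))) : Prop :=
  ∀ p ∈ A, ∀ q ∈ A, 0 ≤ pairXR (p.1 - q.1) (p.2 - q.2)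

/-- Domain of an operator `A : X × ℝ ⇉ X* × ℝ`. -/
def graphDomXR (A : Set ((X × ℝ) × ((X →L[ℝ] ℝ) × ℝ))) : Set (X × ℝ) :=
  {c | ∃ u, (c, u) ∈ A}

/-- The normal cone operator of a subset of `X × ℝ`, as a graph. -/
def normalConeGraphXR (C : Set (X × ℝ)) : Set ((X × ℝ) × ((X →L[ℝ] ℝ) × ℝ)) :=
  {p | p.1 ∈ C ∧ ∀ d ∈ C, pairXR (d - p.1) p.2 ≤ 0}

/-- The operator `A_X : X ⇉ X*` induced by `A : X × ℝ ⇉ X* × ℝ`. -/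
def inducedGraph (A : Set ((X × ℝ) × ((X →L[ℝ] ℝ) × ℝ))) : Set (X × (X →L[ℝ] ℝ)) :=
  {p | ∃ lam : ℝ, ((p.1, lam), (p.2, (-1 : ℝ))) ∈ A}

/-- `d` belongs to the recession cone of `C`, i.e. `C + ℝ₊ d = C` (as a set equality). -/
def recessionEq {Y : Type*} [AddCommGroup Y] [Module ℝ Y] (C : Set Y) (d : Y) : Prop :=
  {y | ∃ c ∈ C, ∃ t : ℝ, 0 ≤ t ∧ y = c + t • d} = C

def supportFn (C : Set (X →L[ℝ] ℝ)) (x : X) : EReal :=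
  sSup ((fun u : X →L[ℝ] ℝ => ((u x : ℝ) : EReal)) '' C)

theorem supportFn_eq_of_forall_le {C : Set (X →L[ℝ] ℝ)} {u : X →L[ℝ] ℝ} {x : X} (hu : u ∈ C)
    (hmax : ∀ v ∈ C, v x ≤ u x) : supportFn C x = (u x : EReal) :=
  IsGreatest.csSup_eq
    ⟨mem_image_of_mem _ hu, forall_mem_image.2 fun v hv => EReal.coe_le_coe (hmax v hv)⟩

theorem mem_subdiffGraph_supportFn {C : Set (X →L[ℝ] ℝ)} {u : X →L[ℝ] ℝ} {x : X} (hu : u ∈ C)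
    (hmax : ∀ v ∈ C, v x ≤ u x) : (x, u) ∈ subdiffGraph (supportFn C) := by
  intro y
  rw [supportFn_eq_of_forall_le hu hmax, ← EReal.coe_add, map_sub, add_sub_cancel]
  exact le_sSup (mem_image_of_mem _ hu)

theorem closure_convexHull_subset_setOf_le {E : Type*} [AddCommGroup E] [Module ℝ E]
    [TopologicalSpace E] (ℓ : E →L[ℝ] ℝ) {S : Set E} {c : ℝ} (hS : ∀ v ∈ S, ℓ v ≤ c) :
    closure (convexHull ℝ S) ⊆ {v | ℓ v ≤ c} :=
  closure_minimal (convexHull_min hS (convex_halfSpace_le ℓ.isLinear c))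
    (isClosed_le ℓ.continuous continuous_const)

theorem MonotoneGraph.apply_le_of_mem_zero {T : Set (X × (X →L[ℝ] ℝ))} (hmono : MonotoneGraph T)
    {x : X} {u v : X →L[ℝ] ℝ} (hu : (x, u) ∈ T) (hv : ((0 : X), v) ∈ T) : v x ≤ u x := by
  simpa [sub_nonneg] using hmono (x, u) hu (0, v) hv

theorem monotone_rangeEqAtZero_subset_subdiff_support_general
    {X : Type*} [NormedAddCommGroup X] [NormedSpace ℝ X]
    (T : Set (X × (X →L[ℝ] ℝ)))
    (hmono : MonotoneGraph T)
    (hrange : graphRange T = {u : X →L[ℝ] ℝ | ((0 : X), u) ∈ T}) :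
    T ⊆ subdiffGraph (fun x : X =>
      sSup ((fun u : X →L[ℝ] ℝ => ((u x : ℝ) : EReal)) ''
        closure (convexHull ℝ {u : X →L[ℝ] ℝ | ((0 : X), u) ∈ T}))) := by
  rintro ⟨x, u⟩ hxu
  have hu : u ∈ {v | ((0 : X), v) ∈ T} := hrange ▸ ⟨x, hxu⟩
  have hmax : ∀ v ∈ closure (convexHull ℝ {v | ((0 : X), v) ∈ T}), v x ≤ u x :=
    closure_convexHull_subset_setOf_le (ContinuousLinearMap.apply ℝ ℝ x)
      fun v hv => hmono.apply_le_of_mem_zero hxu hv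
  exact mem_subdiffGraph_supportFn (subset_closure (subset_convexHull ℝ _ hu)) hmax

/-- a monotone operator whose range equals its value at `0` is contained
in the subdifferential of the support functional of the closed convex hull of `T(0)`. -/
theorem monotone_rangeEqAtZero_subset_subdiff_support
    {X : Type*} [NormedAddCommGroup X] [NormedSpace ℝ X] [CompleteSpace X]
    (T : Set (X × (X →L[ℝ] ℝ)))
    (hmono : MonotoneGraph T)
    (hrange : graphRange T = {u : X →L[ℝ] ℝ | ((0 : X), u) ∈ T}) :
    T ⊆ subdiffGraph (fun x : X =>
      sSup ((fun u : X →L[ℝ] ℝ => ((u x : ℝ) : EReal)) ''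
        closure (convexHull ℝ {u : X →L[ℝ] ℝ | ((0 : X), u) ∈ T}))) :=
  monotone_rangeEqAtZero_subset_subdiff_support_general T hmono hrange
end
end

section
/- Let X be a real Banach space with topological dual X*, and let T : X ⇉ X* be a set-valued operator identified with its graph. There exists a lower semicontinuous proper convex functional f : X → ℝ ∪ {+∞} such that T = ∂f if and only if T is maximally monotone and there exists a monotone operator A : X × ℝ ⇉ X* × ℝ satisfying (i) there exists x* ∈ X* with sup{⟨x, x*⟩ − λ : (x, λ) ∈ cl conv (dom A)} < +∞, (ii) (0_X, 1) belongs to the recession cone of cl conv (dom A), (iii) (0_{X*}, 0) ∈ A(x, λ) for every (x, λ) ∈ dom A, such that T = A_X, where A_X(x) := {x* ∈ X* : (x*, −1) ∈ A(x, λ) for some λ ∈ ℝ}. -/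
open Set

noncomputable section

variable {X : Type*} [NormedAddCommGroup X] [NormedSpace ℝ X]

/-!
`T = ∂f` ⟹ the conditions: take `A` the normal cone operator of `epi f`, whose domain is the
closed convex set `epi f`; an affine minorant of `f` gives (i), and `(x*, -1)` is normal to
`epi f` at `(x, f x)` exactly when `x* ∈ ∂f(x)`. Maximal monotonicity of `∂f` is Rockafellar's
theorem: if `(z, z*)` is monotonically related to `∂f` but `f y₁ < f z + ⟨y₁ - z, z*⟩`, apply
Ekeland's principle to `f - ⟨· - z, z*⟩ + ε‖· - z‖` (plus a hinge making it bounded below) from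
`y₁`. Separating the epigraph of `f` from a strict hypograph yields a subgradient `v` of `f` at the
Ekeland point `x̄`; the monotone relation of `(x̄, v)` with `(z, z*)` forces `x̄ = z`, and then the
value at `z` does not exceed the one at `y₁`, which for small `ε` is below `f z`.

The conditions ⟹ `T = ∂f`: take `f` the supremum of the affine functions `λ + ⟨· - x, x*⟩` over
`((x, λ), (x*, -1)) ∈ A`. Monotonicity of `A` against the points `((y, μ), 0)` of (iii) gives
`f y ≤ μ` on `dom A`, hence `A_X ⊆ ∂f`, and maximality of `T = A_X` gives equality.
-/

lemma coe_le_of_forall_mem_epi {α : Type*} {f : α → EReal} {y : α} {c : ℝ}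
    (h : ∀ t : ℝ, (y, t) ∈ Epi f → c ≤ t) : (c : EReal) ≤ f y :=
  EReal.le_of_forall_lt_iff_le.1 fun t ht => EReal.coe_le_coe_iff.2 (h t ht.le)

lemma isClosed_epi {α : Type*} [TopologicalSpace α] {f : α → EReal}
    (hf : LowerSemicontinuous f) : IsClosed (Epi f) :=
  (lowerSemicontinuous_iff_isClosed_epigraph.1 hf).preimage
    (continuous_fst.prodMk (continuous_coe_real_ereal.comp continuous_snd))

lemma convex_epi {f : X → EReal} (hf : ConvexFn f) : Convex ℝ (Epi f) := by
  rintro ⟨x, a⟩ hxa ⟨y, b⟩ hyb s t hs ht hst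
  obtain rfl : t = 1 - s := by linarith
  calc f (s • x + (1 - s) • y) ≤ (s : EReal) * f x + ((1 - s : ℝ) : EReal) * f y :=
        hf x y s hs (by linarith)
    _ ≤ (s : EReal) * a + ((1 - s : ℝ) : EReal) * b :=
        add_le_add (mul_le_mul_of_nonneg_left hxa (by exact_mod_cast hs))
          (mul_le_mul_of_nonneg_left hyb (by exact_mod_cast ht))
    _ = ((s * a + (1 - s) * b : ℝ) : EReal) := by push_cast; rfl

lemma LowerSemicontinuous.add_real {α : Type*} [TopologicalSpace α] {f : α → EReal}
    (hf : LowerSemicontinuous f) {g : α → ℝ} (hg : Continuous g) :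
    LowerSemicontinuous fun x => f x + (g x : EReal) :=
  hf.add' (continuous_coe_real_ereal.comp hg).lowerSemicontinuous fun _ =>
    EReal.continuousAt_add (Or.inr (EReal.coe_ne_bot _)) (Or.inr (EReal.coe_ne_top _))

lemma ProperFn.ne_top_of_mem_subdiffGraph {f : X → EReal} (hp : ProperFn f) {x : X}
    {u : X →L[ℝ] ℝ} (hxu : (x, u) ∈ subdiffGraph f) : f x ≠ ⊤ := by
  obtain ⟨y, hy⟩ := hp.2
  intro hx
  have := hxu y
  rw [hx, EReal.top_add_coe, top_le_iff] at this
  exact hy this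

lemma monotoneGraph_subdiffGraph {f : X → EReal} (hp : ProperFn f) :
    MonotoneGraph (subdiffGraph f) := by
  rintro ⟨x, u⟩ hxu ⟨y, w⟩ hyw
  have hx := EReal.coe_toReal (hp.ne_top_of_mem_subdiffGraph hxu) (hp.1 x)
  have hy := EReal.coe_toReal (hp.ne_top_of_mem_subdiffGraph hyw) (hp.1 y)
  have h1 := hxu y
  have h2 := hyw x
  rw [← hx, ← hy, ← EReal.coe_add, EReal.coe_le_coe_iff] at h1 h2
  simp only [sub_apply, map_sub] at h1 h2 ⊢
  linarith

lemma ContinuousLinearMap.exists_apply_prod_eq_mul_sub (L : X × ℝ →L[ℝ] ℝ) (hL : L (0, 1) ≠ 0) :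
    ∃ v : X →L[ℝ] ℝ, ∀ y t, L (y, t) = L (0, 1) * (t - v y) := by
  refine ⟨-(L (0, 1))⁻¹ • L.comp (ContinuousLinearMap.inl ℝ X ℝ), fun y t => ?_⟩
  have hsplit : L (y, t) = L (y, 0) + t * L (0, 1) := by
    rw [← smul_eq_mul, ← map_smul, ← map_add]
    simp
  simp only [hsplit, smul_apply, ContinuousLinearMap.comp_apply,
    ContinuousLinearMap.inl_apply, smul_eq_mul, neg_mul, sub_neg_eq_add]
  field_simp
  ring

lemma exists_affine_of_separates_epi {f : X → EReal} {L : X × ℝ →L[ℝ] ℝ} {s : ℝ} {x₀ : X}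
    {t₀ : ℝ} (hx₀ : f x₀ ≠ ⊤) (hsep : ∀ p ∈ Epi f, s ≤ L p) (ht₀ : L (x₀, t₀) < s) :
    ∃ (v : X →L[ℝ] ℝ) (c : ℝ), (∀ y, ((v y + c : ℝ) : EReal) ≤ f y) ∧
      ∀ y t, L (y, t) < s → t < v y + c := by
  -- The hyperplane is not vertical, since `epi f` contains the upward ray over `x₀`.
  have hβ : 0 < L (0, 1) := by
    by_contra! hβ
    set t₁ := max t₀ (f x₀).toReal
    have hmem : s ≤ L (x₀, t₁) :=
      hsep _ ((EReal.le_coe_toReal hx₀).trans (by exact_mod_cast le_max_right _ _))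
    have hsplit : L (x₀, t₁) = L (x₀, t₀) + (t₁ - t₀) * L (0, 1) := by
      rw [← smul_eq_mul, ← map_smul, ← map_add]
      simp
    nlinarith [le_max_left t₀ (f x₀).toReal]
  obtain ⟨v, hv⟩ := L.exists_apply_prod_eq_mul_sub hβ.ne'
  refine ⟨v, s / L (0, 1), fun y => coe_le_of_forall_mem_epi fun t ht => ?_, fun y t ht => ?_⟩
  · have := (div_le_iff₀' hβ).2 ((hsep _ ht).trans_eq (hv y t))
    linarith
  · have := (lt_div_iff₀' hβ).2 ((hv y t).symm.trans_lt ht)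
    linarith

lemma exists_affine_le {f : X → EReal} (hlsc : LowerSemicontinuous f) (hp : ProperFn f)
    (hc : ConvexFn f) : ∃ (v : X →L[ℝ] ℝ) (c : ℝ), ∀ y, ((v y + c : ℝ) : EReal) ≤ f y := by
  obtain ⟨x₀, hx₀⟩ := hp.2
  have hout : (x₀, (f x₀).toReal - 1) ∉ Epi f := fun h => by
    have : (f x₀).toReal ≤ (f x₀).toReal - 1 := by
      exact_mod_cast (EReal.coe_toReal hx₀ (hp.1 x₀)).trans_le h
    linarith
  obtain ⟨L, s, hout, hsep⟩ :=
    geometric_hahn_banach_point_closed (convex_epi hc) (isClosed_epi hlsc) hout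
  obtain ⟨v, c, hvc, -⟩ := exists_affine_of_separates_epi hx₀ (fun p hp => (hsep p hp).le) hout
  exact ⟨v, c, hvc⟩

lemma exists_subgradient_of_forall_add_le {f : X → EReal} (hc : ConvexFn f) {g : X → ℝ}
    (hgc : ConvexOn ℝ univ g) (hg : Continuous g) {x : X} (hfx : f x ≠ ⊤) (hfx' : f x ≠ ⊥)
    (hmin : ∀ y, f x + g x ≤ f y + g y) :
    ∃ v : X →L[ℝ] ℝ, (x, v) ∈ subdiffGraph f ∧ ∀ y, g x - v (y - x) ≤ g y := by
  set r := (f x).toReal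
  have hr : f x = r := (EReal.coe_toReal hfx hfx').symm
  set B : Set (X × ℝ) := {p | p.1 ∈ univ ∧ p.2 < r + g x - g p.1}
  have hBconv : Convex ℝ B :=
    ((concaveOn_const (r + g x) convex_univ).sub hgc).convex_strict_hypograph
  have hBopen : IsOpen B := by
    simp only [B, mem_univ, true_and]
    exact isOpen_lt continuous_snd (by fun_prop)
  have hdisj : Disjoint B (Epi f) := by
    refine Set.disjoint_left.2 ?_
    rintro ⟨y, t⟩ ⟨-, hyt⟩ (hepi : f y ≤ t)
    have : f y + g y < f x + g x := by
      calc f y + g y ≤ ((t + g y : ℝ) : EReal) := by rw [EReal.coe_add]; gcongr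
        _ < f x + g x := by
          rw [hr, ← EReal.coe_add, EReal.coe_lt_coe_iff]
          linarith
    exact (hmin y).not_gt this
  obtain ⟨L, s, hB, hsep⟩ := geometric_hahn_banach_open hBconv hBopen (convex_epi hc) hdisj
  obtain ⟨v, c, hvc, hbelow⟩ := exists_affine_of_separates_epi hfx hsep
    (hB (x, r - 1) ⟨mem_univ _, by simp⟩)
  have hhyp : ∀ y, r + g x - g y ≤ v y + c := fun y =>
    le_of_forall_lt fun t ht => hbelow y t (hB (y, t) ⟨mem_univ _, ht⟩)
  have hrx : r ≤ v x + c := by simpa using hhyp x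
  refine ⟨v, fun y => ?_, fun y => ?_⟩
  · calc f x + ((v (y - x) : ℝ) : EReal) = ((r + v (y - x) : ℝ) : EReal) := by rw [hr]; rfl
      _ ≤ ((v y + c : ℝ) : EReal) := by
          rw [EReal.coe_le_coe_iff, map_sub]
          linarith
      _ ≤ f y := hvc y
  · have hvcx : ((v x + c : ℝ) : EReal) ≤ r := hr ▸ hvc x
    rw [map_sub]
    linarith [hhyp y, EReal.coe_le_coe_iff.1 hvcx]

lemma EReal.exists_mem_forall_le_add {α : Type*} {F : α → EReal} {s : Set α} {m : ℝ}
    (hm : ∀ y ∈ s, (m : EReal) ≤ F y) (hs : ∃ y ∈ s, F y ≠ ⊤) {ε : ℝ} (hε : 0 < ε) :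
    ∃ y ∈ s, ∀ z ∈ s, F y ≤ F z + ε := by
  obtain ⟨y₀, hy₀, hy₀top⟩ := hs
  set I := sInf (F '' s)
  have hI : I ≠ ⊤ := ne_top_of_le_ne_top hy₀top (sInf_le (mem_image_of_mem F hy₀))
  have hI' : I ≠ ⊥ :=
    ne_bot_of_le_ne_bot (EReal.coe_ne_bot m) (le_sInf (forall_mem_image.2 hm))
  have hlt : I < I + ε := by
    rw [← EReal.coe_toReal hI hI', ← EReal.coe_add, EReal.coe_lt_coe_iff]
    linarith
  obtain ⟨_, ⟨y, hy, rfl⟩, hyI⟩ := sInf_lt_iff.1 hlt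
  exact ⟨y, hy, fun z hz => hyI.le.trans (by gcongr; exact sInf_le (mem_image_of_mem F hz))⟩

section Ekeland

variable {Y : Type*} [MetricSpace Y] {F : Y → EReal} {δ : ℝ}

def ekelandSet (F : Y → EReal) (δ : ℝ) (w : Y) : Set Y :=
  {y | F y + ((δ * dist y w : ℝ) : EReal) ≤ F w}

lemma self_mem_ekelandSet (w : Y) : w ∈ ekelandSet F δ w := by
  simp [ekelandSet]

lemma le_of_mem_ekelandSet (hδ : 0 ≤ δ) {w y : Y} (hy : y ∈ ekelandSet F δ w) : F y ≤ F w :=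
  (le_add_of_nonneg_right (by exact_mod_cast mul_nonneg hδ dist_nonneg)).trans hy

lemma ekelandSet_subset (hδ : 0 ≤ δ) {w y : Y} (hy : y ∈ ekelandSet F δ w) :
    ekelandSet F δ y ⊆ ekelandSet F δ w := by
  intro z (hz : F z + ((δ * dist z y : ℝ) : EReal) ≤ F y)
  calc F z + ((δ * dist z w : ℝ) : EReal)
      ≤ F z + ((δ * dist z y : ℝ) : EReal) + ((δ * dist y w : ℝ) : EReal) := by
        rw [add_assoc, ← EReal.coe_add]
        gcongr
        nlinarith [dist_triangle z y w]
    _ ≤ F y + ((δ * dist y w : ℝ) : EReal) := by gcongr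
    _ ≤ F w := hy

lemma isClosed_ekelandSet (hF : LowerSemicontinuous F) (w : Y) : IsClosed (ekelandSet F δ w) :=
  (hF.add_real (by fun_prop)).isClosed_preimage (F w)

lemma exists_ekelandSet_subset_closedBall (hδ : 0 < δ) {m : ℝ} (hm : ∀ y, (m : EReal) ≤ F y)
    {x₀ : Y} (hx₀ : F x₀ ≠ ⊤) (w : Y) {ε : ℝ} (hε : 0 < ε) :
    ∃ y ∈ ekelandSet F δ w, ekelandSet F δ y ⊆ Metric.closedBall y (ε / δ) := by
  have hfin : ∃ z ∈ ekelandSet F δ w, F z ≠ ⊤ := by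
    by_cases hw : F w = ⊤
    · exact ⟨x₀, by simp [ekelandSet, hw], hx₀⟩
    · exact ⟨w, self_mem_ekelandSet w, hw⟩
  obtain ⟨z₀, hz₀, hz₀top⟩ := hfin
  obtain ⟨y, hy, hymin⟩ :=
    EReal.exists_mem_forall_le_add (fun y _ => hm y) ⟨z₀, hz₀, hz₀top⟩ hε
  refine ⟨y, hy, fun z hz => ?_⟩
  have hyz : F y ≤ F z + ε := hymin z (ekelandSet_subset hδ.le hy hz)
  have hztop : F z ≠ ⊤ := ne_top_of_le_ne_top
    (ne_top_of_le_ne_top (EReal.add_ne_top hz₀top (EReal.coe_ne_top ε)) (hymin z₀ hz₀))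
    (le_of_mem_ekelandSet hδ.le hz)
  have hzy : F z + ((δ * dist z y : ℝ) : EReal) ≤ F z + ε := le_trans hz hyz
  rw [← EReal.coe_toReal hztop (ne_bot_of_le_ne_bot (EReal.coe_ne_bot m) (hm z)),
    ← EReal.coe_add, ← EReal.coe_add, EReal.coe_le_coe_iff] at hzy
  rw [Metric.mem_closedBall, le_div_iff₀ hδ]
  linarith

/-- Ekeland's variational principle. -/
theorem exists_forall_le_add_mul_dist [CompleteSpace Y] (hF : LowerSemicontinuous F) {m : ℝ}
    (hm : ∀ y, (m : EReal) ≤ F y) {x₀ : Y} (hx₀ : F x₀ ≠ ⊤) (hδ : 0 < δ) :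
    ∃ xb, F xb ≤ F x₀ ∧ ∀ y, F xb ≤ F y + ((δ * dist y xb : ℝ) : EReal) := by
  choose next hnext hball using fun (n : ℕ) (w : Y) =>
    exists_ekelandSet_subset_closedBall hδ hm hx₀ w (Nat.one_div_pos_of_nat (n := n))
  let x : ℕ → Y := fun n => Nat.rec x₀ (fun k w => next k w) n
  set S : ℕ → Set Y := fun n => ekelandSet F δ (x (n + 1))
  have hS_anti : Antitone S :=
    antitone_nat_of_succ_le fun n => ekelandSet_subset hδ.le (hnext (n + 1) (x (n + 1)))
  have hdiam : ∀ n, Metric.diam (S n) ≤ 2 * (1 / ((n : ℝ) + 1) / δ) := fun n =>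
    Metric.diam_le_of_subset_closedBall (by positivity) (hball n (x n))
  have hdiam0 : Filter.Tendsto (fun n => Metric.diam (S n)) Filter.atTop (nhds 0) := by
    refine squeeze_zero (fun n => Metric.diam_nonneg) hdiam ?_
    simpa using ((tendsto_one_div_add_atTop_nhds_zero_nat).div_const δ).const_mul 2
  have hbdd : ∀ n, Bornology.IsBounded (S n) := fun n =>
    Metric.isBounded_closedBall.subset (hball n (x n))
  obtain ⟨xb, hxb⟩ := Metric.nonempty_iInter_of_nonempty_biInter
    (fun n => isClosed_ekelandSet hF _) hbdd
    (fun N => ⟨x (N + 1), mem_iInter₂.2 fun n hn => hS_anti hn (self_mem_ekelandSet _)⟩) hdiam0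
  rw [mem_iInter] at hxb
  refine ⟨xb, le_of_mem_ekelandSet hδ.le (ekelandSet_subset hδ.le (hnext 0 x₀) (hxb 0)), ?_⟩
  intro y
  by_contra! hy
  have hyS : ∀ n, y ∈ S n := fun n => ekelandSet_subset hδ.le (hxb n) hy.le
  have hdist : dist y xb = 0 := le_antisymm
    (ge_of_tendsto' hdiam0 fun n => Metric.dist_le_diam_of_mem (hbdd n) (hyS n) (hxb n))
    dist_nonneg
  rw [dist_eq_zero.1 hdist, dist_self, mul_zero, EReal.coe_zero, add_zero] at hy
  exact hy.false

end Ekeland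

lemma exists_mem_subdiffGraph_of_bddBelow_add [CompleteSpace X] {f : X → EReal}
    (hlsc : LowerSemicontinuous f) (hc : ConvexFn f) {φ : X → ℝ} (hφc : ConvexOn ℝ univ φ)
    (hφ : Continuous φ) {m : ℝ} (hm : ∀ x, (m : EReal) ≤ f x + φ x) {x₀ : X} (hx₀ : f x₀ ≠ ⊤)
    {δ : ℝ} (hδ : 0 < δ) :
    ∃ xb v, (xb, v) ∈ subdiffGraph f ∧ f xb + φ xb ≤ f x₀ + φ x₀ ∧
      ∀ y, φ xb - v (y - xb) ≤ φ y + δ * dist y xb := by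
  obtain ⟨xb, hxb, hmin⟩ := exists_forall_le_add_mul_dist (hlsc.add_real hφ) hm
    (EReal.add_ne_top hx₀ (EReal.coe_ne_top _)) hδ
  have hxb_top : f xb ≠ ⊤ := fun h => by
    rw [h, EReal.top_add_coe, top_le_iff] at hxb
    exact EReal.add_ne_top hx₀ (EReal.coe_ne_top _) hxb
  have hxb_bot : f xb ≠ ⊥ := fun h => by
    have := hm xb
    rw [h, EReal.bot_add, le_bot_iff] at this
    exact EReal.coe_ne_bot m this
  obtain ⟨v, hv, hvg⟩ := exists_subgradient_of_forall_add_le hc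
    (hφc.add ((convexOn_univ_dist xb).smul hδ.le)) (hφ.add (by fun_prop)) hxb_top hxb_bot
    fun y => by simpa [← add_assoc] using hmin y
  exact ⟨xb, v, hv, hxb, fun y => by simpa using hvg y⟩

lemma exists_mem_subdiffGraph_tilted [CompleteSpace X] {f : X → EReal}
    (hlsc : LowerSemicontinuous f) (hp : ProperFn f) (hc : ConvexFn f) (z : X) (zs : X →L[ℝ] ℝ)
    {y₁ : X} (hy₁ : f y₁ ≠ ⊤) {ε : ℝ} (hε : 0 < ε) :
    ∃ xb v, (xb, v) ∈ subdiffGraph f ∧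
      f xb + ((-zs (xb - z) + ε * dist xb z : ℝ) : EReal) ≤
        f y₁ + ((-zs (y₁ - z) + ε * dist y₁ z : ℝ) : EReal) ∧
      ε * dist xb z + (v - zs) (xb - z) ≤ ε / 2 * dist xb z := by
  obtain ⟨u₀, c₀, hu₀⟩ := exists_affine_le hlsc hp hc
  set ρ := dist y₁ z
  set K := ‖u₀ - zs‖
  -- The hinge term makes `f + φ` bounded below and vanishes on the ball about `z` through `y₁`.
  set φ : X → ℝ := fun x => -zs (x - z) + ε * dist x z + K * max (dist x z - ρ) 0
  have hφc : ConvexOn ℝ univ φ := by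
    refine ((((-zs).toLinearMap.convexOn convex_univ).add_const (zs z)).add
      (((convexOn_univ_dist z).smul hε.le).add
        ((((convexOn_univ_dist z).add_const (-ρ)).sup
          (convexOn_const 0 convex_univ)).smul (norm_nonneg (u₀ - zs))))).congr fun x _ => ?_
    simp only [φ, K, Pi.add_apply, Pi.sup_apply, smul_eq_mul, ContinuousLinearMap.coe_coe,
      neg_apply, map_sub, ← sub_eq_add_neg]
    ring
  have hbound : ∀ x, ((u₀ z + c₀ - K * ρ : ℝ) : EReal) ≤ f x + φ x := fun x => by
    refine le_trans ?_ (add_le_add_left (hu₀ x) _)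
    rw [← EReal.coe_add, EReal.coe_le_coe_iff]
    have hop : |(u₀ - zs) (x - z)| ≤ K * dist x z := by
      simpa [dist_eq_norm] using (u₀ - zs).le_opNorm (x - z)
    have hmax : K * (dist x z - ρ) ≤ K * max (dist x z - ρ) 0 :=
      mul_le_mul_of_nonneg_left (le_max_left _ _) (norm_nonneg _)
    have hdist : 0 ≤ ε * dist x z := mul_nonneg hε.le dist_nonneg
    simp only [φ, sub_apply, map_sub] at hop ⊢
    linarith [neg_abs_le ((u₀ x - zs x) - (u₀ z - zs z))]
  obtain ⟨xb, v, hv, hxb, hvφ⟩ := exists_mem_subdiffGraph_of_bddBelow_add hlsc hc hφc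
    (by fun_prop) hbound hy₁ (half_pos hε)
  have hhinge : 0 ≤ K * max (dist xb z - ρ) 0 := mul_nonneg (norm_nonneg _) (le_max_right _ _)
  refine ⟨xb, v, hv, ?_, ?_⟩
  · calc f xb + ((-zs (xb - z) + ε * dist xb z : ℝ) : EReal) ≤ f xb + φ xb := by
          gcongr
          exact le_add_of_nonneg_right hhinge
      _ ≤ f y₁ + φ y₁ := hxb
      _ = f y₁ + ((-zs (y₁ - z) + ε * dist y₁ z : ℝ) : EReal) := by simp [φ, ρ]
  · have hz := hvφ z
    have hv_neg : v (z - xb) = -v (xb - z) := by rw [← map_neg, neg_sub]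
    have hmax : max (0 - ρ) 0 = 0 := max_eq_right (by simp [ρ, dist_nonneg])
    simp only [φ, sub_self, map_zero, neg_zero, dist_self, dist_comm z xb, hmax] at hz
    simp only [sub_apply]
    linarith

lemma mem_subdiffGraph_of_forall_monotone [CompleteSpace X] {f : X → EReal}
    (hlsc : LowerSemicontinuous f) (hp : ProperFn f) (hc : ConvexFn f) {z : X}
    {zs : X →L[ℝ] ℝ} (hrel : ∀ p ∈ subdiffGraph f, 0 ≤ (p.2 - zs) (p.1 - z)) :
    (z, zs) ∈ subdiffGraph f := by
  intro y₁
  by_contra! hy₁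
  set r₁ := (f y₁).toReal
  have hr₁ : f y₁ = r₁ := (EReal.coe_toReal (ne_top_of_lt hy₁) (hp.1 y₁)).symm
  set w := zs (y₁ - z)
  obtain ⟨α, hα₁, hα₂⟩ := EReal.exists_between_coe_real (EReal.sub_lt_of_lt_add (hr₁ ▸ hy₁))
  rw [← EReal.coe_sub, EReal.coe_lt_coe_iff] at hα₁
  set ε := (α - (r₁ - w)) / (dist y₁ z + 1)
  have hε : 0 < ε := div_pos (by linarith) (by positivity)
  have hερ : r₁ - w + ε * dist y₁ z < α := by
    have : ε * (dist y₁ z + 1) = α - (r₁ - w) := div_mul_cancel₀ _ (by positivity)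
    nlinarith
  obtain ⟨xb, v, hv, hxb, hclose⟩ :=
    exists_mem_subdiffGraph_tilted hlsc hp hc z zs (ne_top_of_lt hy₁) hε
  have hxbz : xb = z := by
    have := hrel _ hv
    rw [← dist_le_zero]
    nlinarith [dist_nonneg (x := xb) (y := z)]
  subst hxbz
  rw [sub_self, map_zero, dist_self, mul_zero, neg_zero, add_zero, EReal.coe_zero, add_zero,
    hr₁, ← EReal.coe_add] at hxb
  exact hα₂.not_ge (hxb.trans (EReal.coe_le_coe_iff.2 (by linarith)))

lemma maximalMonotoneGraph_subdiffGraph [CompleteSpace X] {f : X → EReal}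
    (hlsc : LowerSemicontinuous f) (hp : ProperFn f) (hc : ConvexFn f) :
    MaximalMonotoneGraph (subdiffGraph f) :=
  ⟨monotoneGraph_subdiffGraph hp, fun _ hS hsub => Subset.antisymm
    (fun q hq => mem_subdiffGraph_of_forall_monotone hlsc hp hc fun p hp => hS p (hsub hp) q hq)
    hsub⟩

lemma monotoneGraphXR_normalConeGraphXR (C : Set (X × ℝ)) :
    MonotoneGraphXR (normalConeGraphXR C) := by
  rintro ⟨c, u⟩ ⟨hc, hcu⟩ ⟨d, w⟩ ⟨hd, hdw⟩
  have h₁ := hcu d hd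
  have h₂ := hdw c hc
  simp only [pairXR, Prod.fst_sub, Prod.snd_sub, sub_apply, map_sub] at h₁ h₂ ⊢
  linarith

lemma zero_mem_normalConeGraphXR {C : Set (X × ℝ)} {c : X × ℝ} (hc : c ∈ C) :
    (c, ((0 : X →L[ℝ] ℝ), (0 : ℝ))) ∈ normalConeGraphXR C :=
  ⟨hc, fun d _ => by simp [pairXR]⟩

lemma graphDomXR_normalConeGraphXR (C : Set (X × ℝ)) :
    graphDomXR (normalConeGraphXR C) = C :=
  Subset.antisymm (fun _ ⟨_, hu⟩ => hu.1) fun _ hc => ⟨_, zero_mem_normalConeGraphXR hc⟩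

lemma recessionEq_epi {E : Type*} [AddCommGroup E] [Module ℝ E] (f : E → EReal) :
    recessionEq (Epi f) ((0 : E), (1 : ℝ)) := by
  refine Subset.antisymm ?_ fun p hp => ⟨p, hp, 0, le_rfl, by simp⟩
  rintro _ ⟨⟨x, s⟩, hs : f x ≤ s, t, ht, rfl⟩
  change f (x + t • 0) ≤ ((s + t • 1 : ℝ) : EReal)
  rw [smul_zero, add_zero, smul_eq_mul, mul_one]
  exact hs.trans (EReal.coe_le_coe_iff.2 (by linarith))

lemma subdiffGraph_eq_inducedGraph_normalConeGraphXR {f : X → EReal} (hp : ProperFn f) :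
    subdiffGraph f = inducedGraph (normalConeGraphXR (Epi f)) := by
  ext ⟨x, xs⟩
  simp only [inducedGraph, normalConeGraphXR, pairXR, mem_ofPred_eq, Prod.forall]
  constructor
  · intro hxs
    have hfx : f x = (f x).toReal :=
      (EReal.coe_toReal (hp.ne_top_of_mem_subdiffGraph hxs) (hp.1 x)).symm
    refine ⟨(f x).toReal, hfx.le, fun y t (hyt : f y ≤ t) => ?_⟩
    have := (hxs y).trans hyt
    rw [hfx, ← EReal.coe_add, EReal.coe_le_coe_iff] at this
    simp only [Prod.fst_sub, Prod.snd_sub]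
    linarith
  · rintro ⟨lam, hlam : f x ≤ lam, hnormal⟩ y
    calc f x + ((xs (y - x) : ℝ) : EReal) ≤ ((lam + xs (y - x) : ℝ) : EReal) := by
          rw [EReal.coe_add]
          gcongr
      _ ≤ f y := coe_le_of_forall_mem_epi fun t hyt => by
          have := hnormal y t hyt
          simp only [Prod.fst_sub, Prod.snd_sub] at this
          linarith

lemma MaximalMonotoneGraph.nonempty {T : Set (X × (X →L[ℝ] ℝ))} (hT : MaximalMonotoneGraph T) :
    T.Nonempty := by
  by_contra! hempty
  have hmono : MonotoneGraph ({(0, 0)} : Set (X × (X →L[ℝ] ℝ))) := by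
    rintro _ rfl _ rfl
    simp
  exact singleton_ne_empty _ ((hT.2 _ hmono (hempty ▸ empty_subset _)).trans hempty)

lemma convexFn_iSup {ι : Sort*} {g : ι → X → ℝ} (hg : ∀ i, ConvexOn ℝ univ (g i)) :
    ConvexFn fun y => ⨆ i, (g i y : EReal) := by
  intro x y t ht₀ ht₁
  refine iSup_le fun i => ?_
  calc (g i (t • x + (1 - t) • y) : EReal) ≤ ((t * g i x + (1 - t) * g i y : ℝ) : EReal) :=
        EReal.coe_le_coe_iff.2 ((hg i).2 (mem_univ x) (mem_univ y) ht₀ (by linarith) (by ring))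
    _ = (t : EReal) * g i x + ((1 - t : ℝ) : EReal) * g i y := by push_cast; rfl
    _ ≤ (t : EReal) * (⨆ i, (g i x : EReal)) + ((1 - t : ℝ) : EReal) * ⨆ i, (g i y : EReal) :=
        add_le_add (mul_le_mul_of_nonneg_left (le_iSup (fun i => (g i x : EReal)) i)
            (EReal.coe_nonneg.2 ht₀))
          (mul_le_mul_of_nonneg_left (le_iSup (fun i => (g i y : EReal)) i)
            (EReal.coe_nonneg.2 (sub_nonneg.2 ht₁)))

/-- The supremum of the affine functions `y ↦ λ + ⟨y - x, x*⟩` over `((x, λ), (x*, -1)) ∈ A`. -/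
def affineSupXR (A : Set ((X × ℝ) × ((X →L[ℝ] ℝ) × ℝ))) (y : X) : EReal :=
  ⨆ q : {q : (X × ℝ) × (X →L[ℝ] ℝ) // (q.1, (q.2, -1)) ∈ A},
    ((q.1.1.2 + q.1.2 (y - q.1.1.1) : ℝ) : EReal)

section affineSupXR

variable {A : Set ((X × ℝ) × ((X →L[ℝ] ℝ) × ℝ))}

lemma lowerSemicontinuous_affineSupXR : LowerSemicontinuous (affineSupXR A) :=
  lowerSemicontinuous_iSup fun _ =>
    (continuous_coe_real_ereal.comp (by fun_prop)).lowerSemicontinuous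

lemma convexFn_affineSupXR : ConvexFn (affineSupXR A) :=
  convexFn_iSup fun q => ((q.1.2.toLinearMap.convexOn convex_univ).add_const
    (q.1.1.2 - q.1.2 q.1.1.1)).congr fun y _ => by
      simp only [ContinuousLinearMap.coe_coe, Pi.add_apply, map_sub]
      ring

lemma le_affineSupXR {x : X} {lam : ℝ} {xs : X →L[ℝ] ℝ} (h : ((x, lam), (xs, -1)) ∈ A) (y : X) :
    ((lam + xs (y - x) : ℝ) : EReal) ≤ affineSupXR A y :=
  le_iSup (fun q : {q : (X × ℝ) × (X →L[ℝ] ℝ) // (q.1, (q.2, -1)) ∈ A} =>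
    ((q.1.1.2 + q.1.2 (y - q.1.1.1) : ℝ) : EReal)) ⟨((x, lam), xs), h⟩

lemma affineSupXR_le (hA : MonotoneGraphXR A)
    (hzero : ∀ c ∈ graphDomXR A, (c, ((0 : X →L[ℝ] ℝ), (0 : ℝ))) ∈ A) {x : X} {lam : ℝ}
    {u : (X →L[ℝ] ℝ) × ℝ} (hx : ((x, lam), u) ∈ A) : affineSupXR A x ≤ lam := by
  refine iSup_le fun ⟨((y, μ), ys), hy⟩ => EReal.coe_le_coe_iff.2 ?_
  have := hA _ hy _ (hzero _ ⟨u, hx⟩)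
  simp only [pairXR, Prod.fst_sub, Prod.snd_sub, sub_zero, map_sub] at this ⊢
  linarith

lemma inducedGraph_subset_subdiffGraph (hA : MonotoneGraphXR A)
    (hzero : ∀ c ∈ graphDomXR A, (c, ((0 : X →L[ℝ] ℝ), (0 : ℝ))) ∈ A) :
    inducedGraph A ⊆ subdiffGraph (affineSupXR A) := by
  rintro ⟨x, xs⟩ ⟨lam, h⟩ y
  calc affineSupXR A x + ((xs (y - x) : ℝ) : EReal) ≤ ((lam + xs (y - x) : ℝ) : EReal) := by
        rw [EReal.coe_add]
        gcongr
        exact affineSupXR_le hA hzero h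
    _ ≤ affineSupXR A y := le_affineSupXR h y

lemma properFn_affineSupXR (hA : MonotoneGraphXR A)
    (hzero : ∀ c ∈ graphDomXR A, (c, ((0 : X →L[ℝ] ℝ), (0 : ℝ))) ∈ A)
    (hne : (inducedGraph A).Nonempty) : ProperFn (affineSupXR A) := by
  obtain ⟨⟨x, xs⟩, lam, h⟩ := hne
  exact ⟨fun y => ne_bot_of_le_ne_bot (EReal.coe_ne_bot _) (le_affineSupXR h y),
    x, ne_top_of_le_ne_top (EReal.coe_ne_top lam) (affineSupXR_le hA hzero h)⟩

end affineSupXR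

/-- `T` is the subdifferential operator of some l.s.c. proper convex
functional iff `T` is maximally monotone and `T = A_X` for some monotone operator
`A : X × ℝ ⇉ X* × ℝ` satisfying conditions (i)-(iii). -/
theorem subdiff_characterization
    {X : Type*} [NormedAddCommGroup X] [NormedSpace ℝ X] [CompleteSpace X]
    (T : Set (X × (X →L[ℝ] ℝ))) :
    (∃ f : X → EReal, LowerSemicontinuous f ∧ ProperFn f ∧ ConvexFn f ∧
        T = subdiffGraph f) ↔
      (MaximalMonotoneGraph T ∧
        ∃ A : Set ((X × ℝ) × ((X →L[ℝ] ℝ) × ℝ)), MonotoneGraphXR A ∧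
          (∃ u : X →L[ℝ] ℝ, ∃ M : ℝ,
            ∀ p ∈ closure (convexHull ℝ (graphDomXR A)), u p.1 - p.2 ≤ M) ∧
          recessionEq (closure (convexHull ℝ (graphDomXR A))) ((0 : X), (1 : ℝ)) ∧
          (∀ c ∈ graphDomXR A, (c, ((0 : X →L[ℝ] ℝ), (0 : ℝ))) ∈ A) ∧
          T = inducedGraph A) := by
  constructor
  · rintro ⟨f, hlsc, hp, hc, rfl⟩
    have hdom : closure (convexHull ℝ (graphDomXR (normalConeGraphXR (Epi f)))) = Epi f := by
      rw [graphDomXR_normalConeGraphXR, (convex_epi hc).convexHull_eq,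
        (isClosed_epi hlsc).closure_eq]
    obtain ⟨u, c, hu⟩ := exists_affine_le hlsc hp hc
    refine ⟨maximalMonotoneGraph_subdiffGraph hlsc hp hc, normalConeGraphXR (Epi f),
      monotoneGraphXR_normalConeGraphXR _, ⟨u, -c, fun p hp => ?_⟩,
      hdom.symm ▸ recessionEq_epi f,
      fun _ hc => zero_mem_normalConeGraphXR ((graphDomXR_normalConeGraphXR _).le hc),
      subdiffGraph_eq_inducedGraph_normalConeGraphXR hp⟩
    rw [hdom] at hp
    have := EReal.coe_le_coe_iff.1 ((hu p.1).trans hp)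
    linarith
  · rintro ⟨hmax, A, hA, -, -, hzero, rfl⟩
    have hp := properFn_affineSupXR hA hzero hmax.nonempty
    exact ⟨affineSupXR A, lowerSemicontinuous_affineSupXR, hp, convexFn_affineSupXR,
      (hmax.2 _ (monotoneGraph_subdiffGraph hp) (inducedGraph_subset_subdiffGraph hA hzero)).symm⟩
end
end
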